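/- arXiv:1401.5896 — 2 statements merged into one kernel-verified Lean document; each statement's English description precedes it below -/
import Mathlib

section
/- For two jointly distributed binary random variables S, V_1 that are independent with P(S=0)=P(V_1=0)=p, 1/2<p<1, and V_2 := S ⊕ V_1: given the observation V_2, we have R_∞(S|V_2) = −log p = R_∞(S), while H(S|V_2) < H(S). -/
/-! Conditioned on `V₂ = v`, the posterior of `S` is proportional to `P_S(s) P_{V₁}(s + v)`, which
for either value of `v` is largest at `s = 0` since `p > 1/2`. So the best guess of `S` ignores
`V₂`, and `Σ_v max_s P(s, v) = Σ_v p P_{V₁}(v) = p`. On the other hand `(s, v₁) ↦ (s, s + v₁)`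
is a bijection, so `H(S, V₂) = H(S, V₁) = 2 h(p)`, while `V₂` is Bernoulli with
`q = p² + (1 - p)² ∈ [1/2, p)`. Hence `H(S | V₂) = 2 h(p) - h(q) < h(p)`, since `h` decreases
on `[1/2, 1]`. -/

open Finset Real Filter

/-- `P` is a probability mass function on the finite set `α`. -/
def IsPMF {α : Type*} [Fintype α] (P : α → ℝ) : Prop :=
  (∀ x, 0 ≤ P x) ∧ ∑ x, P x = 1

/-- Min-entropy `R_∞(X) = - log max_x P(x)`. -/
noncomputable def minEnt {α : Type*} [Fintype α] [Nonempty α] (P : α → ℝ) : ℝ :=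
  - Real.log (⨆ x, P x)

/-- Rényi entropy of order `a`: `R_a(X) = (1/(1-a)) log Σ_x P(x)^a`. -/
noncomputable def renyiEnt {α : Type*} [Fintype α] (a : ℝ) (P : α → ℝ) : ℝ :=
  (1 / (1 - a)) * Real.log (∑ x, P x ^ a)

/-- Marginal on the first component of a joint distribution. -/
noncomputable def margX {α β : Type*} [Fintype α] [Fintype β] (P : α × β → ℝ) : α → ℝ :=
  fun x => ∑ y, P (x, y)

/-- Marginal on the second component of a joint distribution. -/
noncomputable def margY {α β : Type*} [Fintype α] [Fintype β] (P : α × β → ℝ) : β → ℝ :=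
  fun y => ∑ x, P (x, y)

/-- Average conditional min-entropy
`R_∞(X|Y) = - log Σ_y P_Y(y) max_x P_{X|Y}(x|y)`. -/
noncomputable def condMinEnt {α β : Type*} [Fintype α] [Fintype β] [Nonempty α]
    (P : α × β → ℝ) : ℝ :=
  - Real.log (∑ y, margY P y * ⨆ x, P (x, y) / margY P y)

/-- Arimoto's conditional Rényi entropy of order `a`:
`R_a(X|Y) = (a/(1-a)) log Σ_y P_Y(y) (Σ_x P_{X|Y}(x|y)^a)^(1/a)`. -/
noncomputable def condRenyiEnt {α β : Type*} [Fintype α] [Fintype β]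
    (a : ℝ) (P : α × β → ℝ) : ℝ :=
  (a / (1 - a)) *
    Real.log (∑ y, margY P y * (∑ x, (P (x, y) / margY P y) ^ a) ^ (1 / a))

/-- Shannon entropy `H(X) = - Σ_x P(x) log P(x)`. -/
noncomputable def shannonEnt {α : Type*} [Fintype α] (P : α → ℝ) : ℝ :=
  ∑ x, Real.negMulLog (P x)

/-- Conditional Shannon entropy `H(X|Y) = H(XY) - H(Y)`. -/
noncomputable def condShannonEnt {α β : Type*} [Fintype α] [Fintype β]
    (P : α × β → ℝ) : ℝ :=
  shannonEnt P - shannonEnt (margY P)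

/-- Distribution of the random variable `X : Ω → α` under the pmf `μ` on `Ω`. -/
noncomputable def dist {Ω α : Type*} [Fintype Ω] [DecidableEq α]
    (μ : Ω → ℝ) (X : Ω → α) : α → ℝ :=
  fun x => ∑ ω, if X ω = x then μ ω else 0

/-- The joint pmf of two independent bits `(S, V_1)`, each `0` with
probability `p`. -/
noncomputable def muBits (p : ℝ) : ZMod 2 × ZMod 2 → ℝ :=
  fun sv => (if sv.1 = 0 then p else 1 - p) * (if sv.2 = 0 then p else 1 - p)

lemma dist_equiv_apply {Ω α : Type*} [Fintype Ω] [DecidableEq α] (μ : Ω → ℝ) (e : Ω ≃ α)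
    (a : α) : dist μ e a = μ (e.symm a) := by
  rw [_root_.dist, Finset.sum_eq_single (e.symm a)]
  · simp
  · intro ω _ hω
    rw [if_neg (fun h => hω (e.eq_symm_apply.2 h))]
  · simp

lemma dist_fst_eq_margX {α β : Type*} [Fintype α] [Fintype β] [DecidableEq α]
    (μ : α × β → ℝ) : dist μ Prod.fst = margX μ := by
  funext a
  rw [_root_.dist, Fintype.sum_prod_type, Finset.sum_eq_single a]
  · simp [margX]
  · intro x _ hx
    simp [hx]
  · simp

lemma condMinEnt_eq_neg_log_sum_iSup {α β : Type*} [Fintype α] [Fintype β] [Nonempty α]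
    (P : α × β → ℝ) (hP : ∀ xy, 0 ≤ P xy) :
    condMinEnt P = - Real.log (∑ y, ⨆ x, P (x, y)) := by
  unfold condMinEnt
  congr 2
  refine Finset.sum_congr rfl fun y _ => ?_
  have hm : 0 ≤ margY P y := Finset.sum_nonneg fun x _ => hP (x, y)
  rcases hm.eq_or_lt with h | h
  · have hzero : ∀ x, P (x, y) = 0 := fun x =>
      (Finset.sum_eq_zero_iff_of_nonneg fun x _ => hP (x, y)).1 h.symm x (Finset.mem_univ x)
    simp [hzero]
  · rw [Real.mul_iSup_of_nonneg h.le]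
    exact iSup_congr fun x => mul_div_cancel₀ _ h.ne'

lemma margX_mul {α β : Type*} [Fintype α] [Fintype β] (f : α → ℝ) (g : β → ℝ)
    (hg : ∑ y, g y = 1) : margX (fun x : α × β => f x.1 * g x.2) = f := by
  funext a
  simp [margX, ← Finset.mul_sum, hg]

lemma shannonEnt_comp_equiv {α β : Type*} [Fintype α] [Fintype β] (P : α → ℝ) (e : β ≃ α) :
    shannonEnt (P ∘ e) = shannonEnt P :=
  e.sum_comp (fun a => negMulLog (P a))

lemma shannonEnt_mul {α β : Type*} [Fintype α] [Fintype β] (f : α → ℝ) (g : β → ℝ)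
    (hf : ∑ x, f x = 1) (hg : ∑ y, g y = 1) :
    shannonEnt (fun x : α × β => f x.1 * g x.2) = shannonEnt f + shannonEnt g := by
  simp only [shannonEnt, negMulLog_mul, Fintype.sum_prod_type, Finset.sum_add_distrib,
    ← Finset.sum_mul, ← Finset.mul_sum, hf, hg]
  ring

section AddShear

variable {G : Type*} [AddGroup G] [Fintype G] [DecidableEq G] (f g : G → ℝ)

lemma dist_fst_add_apply (s v : G) :
    dist (fun x : G × G => f x.1 * g x.2) (fun ω => (ω.1, ω.1 + ω.2)) (s, v) =
      f s * g (-s + v) :=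
  dist_equiv_apply _ (Equiv.prodShear (Equiv.refl G) Equiv.addLeft) (s, v)

lemma shannonEnt_dist_fst_add (hf : ∑ x, f x = 1) (hg : ∑ y, g y = 1) :
    shannonEnt (dist (fun x : G × G => f x.1 * g x.2) (fun ω => (ω.1, ω.1 + ω.2))) =
      shannonEnt f + shannonEnt g := by
  let e : G × G ≃ G × G := Equiv.prodShear (Equiv.refl G) Equiv.addLeft
  have h : dist (fun x : G × G => f x.1 * g x.2) e = (fun x : G × G => f x.1 * g x.2) ∘ e.symm :=
    funext (dist_equiv_apply _ e)
  rw [show (fun ω : G × G => (ω.1, ω.1 + ω.2)) = e from rfl, h, shannonEnt_comp_equiv,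
    shannonEnt_mul f g hf hg]

end AddShear

lemma ZMod.sum_univ_mod_two {M : Type*} [AddCommMonoid M] (f : ZMod 2 → M) :
    ∑ x, f x = f 0 + f 1 :=
  Fin.sum_univ_two f

lemma ZMod.eq_zero_or_eq_one_mod_two (b : ZMod 2) : b = 0 ∨ b = 1 := by
  revert b; decide

noncomputable def bitPMF (p : ℝ) : ZMod 2 → ℝ := fun b => if b = 0 then p else 1 - p

@[simp] lemma bitPMF_zero (p : ℝ) : bitPMF p 0 = p := if_pos rfl

@[simp] lemma bitPMF_one (p : ℝ) : bitPMF p 1 = 1 - p := if_neg one_ne_zero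

lemma muBits_eq (p : ℝ) : muBits p = fun sv => bitPMF p sv.1 * bitPMF p sv.2 := rfl

lemma sum_bitPMF (p : ℝ) : ∑ b, bitPMF p b = 1 := by
  simp [ZMod.sum_univ_mod_two]

lemma bitPMF_nonneg {p : ℝ} (h0 : 0 ≤ p) (h1 : p ≤ 1) (b : ZMod 2) : 0 ≤ bitPMF p b := by
  simp only [bitPMF]; split_ifs <;> linarith

lemma shannonEnt_bitPMF (p : ℝ) : shannonEnt (bitPMF p) = binEntropy p := by
  simp [shannonEnt, ZMod.sum_univ_mod_two, binEntropy_eq_negMulLog_add_negMulLog_one_sub]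

lemma iSup_bitPMF {p : ℝ} (hp : 1 / 2 ≤ p) : ⨆ b, bitPMF p b = p := by
  refine IsGreatest.csSup_eq ⟨⟨0, bitPMF_zero p⟩, ?_⟩
  rintro _ ⟨b, rfl⟩
  simp only [bitPMF]; split_ifs <;> linarith

lemma dist_muBits_xor_apply (p : ℝ) (s v : ZMod 2) :
    dist (muBits p) (fun ω => (ω.1, ω.1 + ω.2)) (s, v) = bitPMF p s * bitPMF p (s + v) := by
  rw [muBits_eq, dist_fst_add_apply, ZMod.neg_eq_self_mod_two]

lemma margY_dist_muBits_xor (p : ℝ) :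
    margY (dist (muBits p) (fun ω => (ω.1, ω.1 + ω.2))) = bitPMF (p ^ 2 + (1 - p) ^ 2) := by
  funext v
  simp only [margY, ZMod.sum_univ_mod_two, dist_muBits_xor_apply]
  rcases v.eq_zero_or_eq_one_mod_two with rfl | rfl <;> simp [CharTwo.add_self_eq_zero] <;> ring

lemma iSup_dist_muBits_xor {p : ℝ} (hp : 1 / 2 ≤ p) (v : ZMod 2) :
    ⨆ s, dist (muBits p) (fun ω => (ω.1, ω.1 + ω.2)) (s, v) = p * bitPMF p v := by
  simp only [dist_muBits_xor_apply]
  refine IsGreatest.csSup_eq ⟨⟨0, by simp⟩, ?_⟩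
  rintro _ ⟨s, rfl⟩
  rcases s.eq_zero_or_eq_one_mod_two with rfl | rfl <;>
    rcases v.eq_zero_or_eq_one_mod_two with rfl | rfl <;> simp [CharTwo.add_self_eq_zero] <;>
    nlinarith

/-- For independent binary `S, V_1` with `P(0) = p`,
`1/2 < p < 1`, and `V_2 := S ⊕ V_1`: `R_∞(S|V_2) = -log p = R_∞(S)` while
`H(S|V_2) < H(S)`. -/
theorem xor_two_case (p : ℝ) (hp : 1 / 2 < p) (hp1 : p < 1) :
    condMinEnt (dist (muBits p) (fun ω => (ω.1, ω.1 + ω.2))) = - Real.log p ∧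
    minEnt (dist (muBits p) Prod.fst) = - Real.log p ∧
    condShannonEnt (dist (muBits p) (fun ω => (ω.1, ω.1 + ω.2))) <
      shannonEnt (dist (muBits p) Prod.fst) := by
  have hS : dist (muBits p) Prod.fst = bitPMF p := by
    rw [dist_fst_eq_margX, muBits_eq, margX_mul _ _ (sum_bitPMF p)]
  have hJ_nonneg : ∀ sv, 0 ≤ dist (muBits p) (fun ω => (ω.1, ω.1 + ω.2)) sv := fun ⟨s, v⟩ => by
    rw [dist_muBits_xor_apply]
    exact mul_nonneg (bitPMF_nonneg (by linarith) hp1.le _) (bitPMF_nonneg (by linarith) hp1.le _)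
  have hV : binEntropy p < binEntropy (p ^ 2 + (1 - p) ^ 2) :=
    binEntropy_strictAntiOn ⟨by nlinarith, by nlinarith⟩ ⟨by linarith, by linarith⟩ (by nlinarith)
  refine ⟨?_, ?_, ?_⟩
  · rw [condMinEnt_eq_neg_log_sum_iSup _ hJ_nonneg]
    simp only [iSup_dist_muBits_xor hp.le, ← Finset.mul_sum, sum_bitPMF, mul_one]
  · rw [minEnt, hS, iSup_bitPMF hp.le]
  · rw [condShannonEnt, hS, margY_dist_muBits_xor, muBits_eq,
      shannonEnt_dist_fst_add _ _ (sum_bitPMF p) (sum_bitPMF p), shannonEnt_bitPMF,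
      shannonEnt_bitPMF]
    linarith
end

section
/- The biased Shamir-type (k,n) construction is ideal but non-perfect for 1/t^k < p < 1/t: R_∞(V_i) = R_∞(S) for all i, yet there exists a set F of k−1 indices with H(S|V_F) < H(S). Moreover, as p ranges over [1/t^k, 1], the value R := R_∞(S) = −log((p t^k + (1−p)t^{k−1} − 1)/(t^k−1)) attains every value in [0, log t]. -/
open Finset Real Filter

/-- The Shamir-type sharing map `φ : F_t^k → F_t^{n+1}` sending
`(s, r_1, …, r_{k-1})` to `(s, v_1, …, v_n)` with
`v_i = s + Σ_{ℓ=1}^{k-1} x_i^ℓ r_ℓ`. -/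
def shamirShare (K : Type*) [Field K] (k n : ℕ) (x : Fin n → K)
    (sr : K × (Fin (k - 1) → K)) : K × (Fin n → K) :=
  (sr.1, fun i => sr.1 + ∑ ℓ : Fin (k - 1), x i ^ ((ℓ : ℕ) + 1) * sr.2 ℓ)

/-- The distribution table `DT_{(k,n)}`, i.e. the image of `shamirShare`. -/
noncomputable def DT (K : Type*) [Field K] [Fintype K] [DecidableEq K]
    (k n : ℕ) (x : Fin n → K) : Finset (K × (Fin n → K)) :=
  Finset.univ.image (shamirShare K k n x)

/-- The biased joint pmf of `(S, V_1, …, V_n)`: probability `p` on the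
all-zero tuple, `(1-p)/(t^k - 1)` on every other tuple of `DT_{(k,n)}`, and
`0` outside `DT_{(k,n)}`, where `t = |K|`. -/
noncomputable def muShamir (K : Type*) [Field K] [Fintype K] [DecidableEq K]
    (k n : ℕ) (x : Fin n → K) (p : ℝ) : K × (Fin n → K) → ℝ :=
  fun sv =>
    if sv = ((0 : K), fun _ => (0 : K)) then p
    else if sv ∈ DT K k n x then
      (1 - p) / ((Fintype.card K : ℝ) ^ k - 1)
    else 0

/-!
Shamir's map `(s, r) ↦ (s, v)` is injective, so `muShamir` is the image of the law on `K × K^(k-1)`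
with mass `p` at `0` and `q = (1 - p)/(t^k - 1)` elsewhere. The secret and every share are of the
form `s + g r` with `g 0 = 0`, so they all have the law "`q t^(k-1)`, plus `p - q` at `0`": the
scheme is ideal. For `k - 1` shares with distinct nonzero abscissae, `(S, V_F)` is a Vandermonde,
hence bijective, image of `(s, r)`, so its law is again "`p` at `0`, `q` elsewhere". As `p ≠ q` this
is not the product of its marginals, and the strict Gibbs inequality gives `H(S | V_F) < H(S)`.
Finally the argument of the logarithm is affine in the bias, which can thus be solved for
explicitly.
-/

lemma sub_lt_mul_log_div {a b : ℝ} (ha : 0 < a) (hb : 0 < b) (hab : a ≠ b) :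
    a - b < a * log (a / b) := by
  have h := log_lt_sub_one_of_pos (div_pos hb ha)
    (by rwa [ne_eq, div_eq_one_iff_eq ha.ne', eq_comm])
  rw [← inv_div a b, log_inv] at h
  have h' := mul_lt_mul_of_pos_left h ha
  rw [mul_sub, inv_div, mul_div_cancel₀ _ ha.ne'] at h'
  linarith

lemma sub_le_mul_log_div {a b : ℝ} (ha : 0 < a) (hb : 0 < b) : a - b ≤ a * log (a / b) := by
  rcases eq_or_ne a b with rfl | hab
  · simp [div_self ha.ne']
  · exact (sub_lt_mul_log_div ha hb hab).le

section Entropy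

variable {α β : Type*} [Fintype α] [Fintype β]

lemma sum_mul_log_eq_neg_shannonEnt (P : α → ℝ) : ∑ a, P a * log (P a) = - shannonEnt P := by
  simp [shannonEnt, negMulLog, Finset.sum_neg_distrib]

lemma sum_margX (P : α × β → ℝ) : ∑ a, margX P a = ∑ z, P z :=
  (Fintype.sum_prod_type P).symm

lemma sum_margY (P : α × β → ℝ) : ∑ b, margY P b = ∑ z, P z := by
  rw [Fintype.sum_prod_type, Finset.sum_comm]; rfl

lemma sum_mul_log_margX (P : α × β → ℝ) :
    ∑ z, P z * log (margX P z.1) = - shannonEnt (margX P) := by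
  rw [← sum_mul_log_eq_neg_shannonEnt, Fintype.sum_prod_type]
  simp only [← Finset.sum_mul]; rfl

lemma sum_mul_log_margY (P : α × β → ℝ) :
    ∑ z, P z * log (margY P z.2) = - shannonEnt (margY P) := by
  rw [← sum_mul_log_eq_neg_shannonEnt, Fintype.sum_prod_type, Finset.sum_comm]
  simp only [← Finset.sum_mul]; rfl

lemma condShannonEnt_lt_shannonEnt_margX [Nonempty α] [Nonempty β] {P : α × β → ℝ}
    (hpos : ∀ z, 0 < P z) (hsum : ∑ z, P z = 1) {z₀ : α × β}
    (hdep : P z₀ ≠ margX P z₀.1 * margY P z₀.2) :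
    condShannonEnt P < shannonEnt (margX P) := by
  have hX : ∀ a, 0 < margX P a := fun a => sum_pos (fun b _ => hpos _) univ_nonempty
  have hY : ∀ b, 0 < margY P b := fun b => sum_pos (fun a _ => hpos _) univ_nonempty
  set g : α × β → ℝ := fun z => margX P z.1 * margY P z.2
  have hg : ∀ z, 0 < g z := fun z => mul_pos (hX _) (hY _)
  have hsum_g : ∑ z, g z = 1 := by
    rw [Fintype.sum_prod_type, ← Finset.sum_mul_sum, sum_margX, sum_margY, hsum, one_mul]
  have gibbs : ∑ z, (P z - g z) < ∑ z, P z * log (P z / g z) :=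
    sum_lt_sum (fun z _ => sub_le_mul_log_div (hpos z) (hg z))
      ⟨z₀, mem_univ _, sub_lt_mul_log_div (hpos z₀) (hg z₀) hdep⟩
  have hlog : ∀ z, P z * log (P z / g z)
      = P z * log (P z) - P z * log (margX P z.1) - P z * log (margY P z.2) := fun z => by
    rw [log_div (hpos z).ne' (hg z).ne', log_mul (hX _).ne' (hY _).ne']; ring
  simp only [hlog, sum_sub_distrib, sum_mul_log_eq_neg_shannonEnt, sum_mul_log_margX,
    sum_mul_log_margY, hsum, hsum_g] at gibbs
  rw [condShannonEnt]; linarith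

end Entropy

section Distribution

variable {Ω α β γ : Type*} [Fintype Ω]

lemma dist_dist [Fintype α] [DecidableEq α] [DecidableEq γ] (μ : Ω → ℝ) (f : Ω → α)
    (X : α → γ) :
    dist (dist μ f) X = dist μ (X ∘ f) := by
  funext c
  simp only [_root_.dist, ite_sum_zero, Function.comp_apply]
  rw [Finset.sum_comm]
  refine sum_congr rfl fun ω _ => ?_
  rw [sum_eq_single (f ω)] <;> aesop

lemma margX_dist [Fintype α] [Fintype β] [DecidableEq α] [DecidableEq β] (μ : Ω → ℝ)
    (X : Ω → α) (Y : Ω → β) :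
    margX (dist μ fun ω => (X ω, Y ω)) = dist μ X := by
  funext a
  simp only [margX, _root_.dist, Prod.mk.injEq]
  rw [Finset.sum_comm]
  simp [ite_and]

lemma dist_ite_zero_of_injective [Zero Ω] [Zero α] [DecidableEq Ω] [DecidableEq α]
    {f : Ω → α} (hf : Function.Injective f) (hf0 : f 0 = 0) (p q : ℝ) :
    dist (fun u => if u = 0 then p else q) f =
      fun a => if a = 0 then p else if a ∈ univ.image f then q else 0 := by
  funext a
  by_cases ha : a ∈ univ.image f
  · obtain ⟨u, -, rfl⟩ := Finset.mem_image.1 ha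
    simp [_root_.dist, hf.eq_iff, ← hf0, ha]
  · have : a ≠ 0 := fun h => ha (h ▸ Finset.mem_image.2 ⟨0, mem_univ _, hf0⟩)
    simp_all [_root_.dist]

lemma ite_eq_add_ite_sub [DecidableEq γ] (a : γ) (p q : ℝ) :
    (fun u => if u = a then p else q) = fun u => q + if u = a then p - q else 0 := by
  funext u; split_ifs <;> ring

lemma dist_ite_zero_apply [Zero Ω] [DecidableEq Ω] [DecidableEq γ] (p q : ℝ) (Y : Ω → γ)
    (c : γ) :
    dist (fun u => if u = 0 then p else q) Y c =
      q * #{u | Y u = c} + if Y 0 = c then p - q else 0 := by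
  rw [ite_eq_add_ite_sub]
  simp only [_root_.dist, ite_add_zero, sum_add_distrib]
  simp [sum_ite, mul_comm]

lemma card_filter_fst_add_eq [Fintype α] [Fintype β] [AddGroup α] [DecidableEq α] (g : β → α)
    (a : α) :
    #{u : α × β | u.1 + g u.2 = a} = Fintype.card β := by
  rw [card_eq_sum_ones, sum_filter, Fintype.sum_prod_type, Finset.sum_comm]
  simp [← eq_sub_iff_add_eq]

lemma dist_fst_add_ite_zero [Fintype α] [Fintype β] [AddGroup α] [DecidableEq α] [Zero β]
    [DecidableEq β] {g : β → α} (hg : g 0 = 0) (p q : ℝ) :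
    dist (fun u => if u = 0 then p else q) (fun u : α × β => u.1 + g u.2) =
      fun a => q * Fintype.card β + if 0 = a then p - q else 0 := by
  funext a
  rw [dist_ite_zero_apply, card_filter_fst_add_eq]
  simp [hg]

end Distribution

lemma condShannonEnt_ite_zero_lt {α β : Type*} [Fintype α] [Fintype β] [Zero α] [Zero β]
    [DecidableEq α] [DecidableEq β] [Nontrivial α] [Nontrivial β] {p q : ℝ} (hp : 0 < p)
    (hq : 0 < q) (hpq : p ≠ q) (hsum : p - q + Fintype.card α * Fintype.card β * q = 1) :
    condShannonEnt (fun z : α × β => if z = 0 then p else q) <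
      shannonEnt (margX fun z : α × β => if z = 0 then p else q) := by
  obtain ⟨a, ha⟩ := exists_ne (0 : α)
  obtain ⟨b, hb⟩ := exists_ne (0 : β)
  refine condShannonEnt_lt_shannonEnt_margX (z₀ := (a, b))
    (fun z => by split_ifs <;> assumption) ?_ ?_
  · rw [ite_eq_add_ite_sub, sum_add_distrib]
    simp [Fintype.card_prod]
    linear_combination hsum
  · simp only [margX, margY, Prod.ext_iff, Prod.fst_zero, Prod.snd_zero, ha, hb, false_and,
      and_false, if_false, sum_const, card_univ, nsmul_eq_mul]
    intro h
    have hcard : Fintype.card α * Fintype.card β * q = (1 : ℝ) :=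
      mul_left_cancel₀ hq.ne' (by linear_combination -h)
    exact hpq (by linarith)

lemma injective_sum_pow_succ_mul {K : Type*} [Field K] {m : ℕ} {y : Fin m → K}
    (hy : Function.Injective y) (hy0 : ∀ i, y i ≠ 0) :
    Function.Injective fun (r : Fin m → K) i => ∑ ℓ : Fin m, y i ^ ((ℓ : ℕ) + 1) * r ℓ := by
  have hM : Matrix.of (fun i ℓ : Fin m => y i ^ ((ℓ : ℕ) + 1)) =
      Matrix.of fun i ℓ => y i * Matrix.vandermonde y i ℓ := by
    ext i ℓ; simp [Matrix.vandermonde, pow_succ']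
  have hdet : (Matrix.of fun i ℓ : Fin m => y i ^ ((ℓ : ℕ) + 1)).det ≠ 0 := by
    rw [hM, Matrix.det_mul_column]
    exact mul_ne_zero (prod_ne_zero_iff.2 fun i _ => hy0 i)
      (Matrix.det_vandermonde_ne_zero_iff.2 hy)
  exact Matrix.mulVec_injective_iff_isUnit.2 ((Matrix.isUnit_iff_isUnit_det _).2 hdet.isUnit)

section Shamir

variable {K : Type*} [Field K] [Fintype K] {k n : ℕ} {x : Fin n → K}

lemma shamirShare_restrict_bijective (hx : Function.Injective x) (hx0 : ∀ i, x i ≠ 0)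
    (e : Fin (k - 1) ↪ Fin n) :
    Function.Bijective ((fun sv : K × (Fin n → K) => (sv.1, fun j : univ.map e => sv.2 j.1)) ∘
      shamirShare K k n x) := by
  have hinj : Function.Injective ((fun sv : K × (Fin n → K) =>
      (sv.1, fun j : univ.map e => sv.2 j.1)) ∘ shamirShare K k n x) := by
    rintro ⟨s, r⟩ ⟨s', r'⟩ h
    simp only [Function.comp_apply, shamirShare, Prod.mk.injEq] at h
    obtain ⟨rfl, hv⟩ := h
    refine Prod.ext rfl (injective_sum_pow_succ_mul (hx.comp e.injective) (fun i => hx0 _) ?_)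
    funext i
    simpa using congrFun hv ⟨e i, mem_map_of_mem e (mem_univ i)⟩
  refine (Fintype.bijective_iff_injective_and_card _).2 ⟨hinj, ?_⟩
  rw [Fintype.card_prod, Fintype.card_prod, Fintype.card_fun, Fintype.card_fun, Fintype.card_coe,
    card_map, card_univ]

lemma shamirShare_injective (hx : Function.Injective x) (hx0 : ∀ i, x i ≠ 0) (hkn : k - 1 ≤ n) :
    Function.Injective (shamirShare K k n x) :=
  (shamirShare_restrict_bijective hx hx0 (Fin.castLEEmb hkn)).injective.of_comp

lemma muShamir_eq_dist [DecidableEq K] (hsh : Function.Injective (shamirShare K k n x)) (p : ℝ) :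
    muShamir K k n x p = dist (fun u => if u = 0 then p else
      (1 - p) / ((Fintype.card K : ℝ) ^ k - 1)) (shamirShare K k n x) := by
  rw [dist_ite_zero_of_injective hsh (by simp [shamirShare]; rfl)]
  rfl

lemma dist_muShamir_share_eq_dist_secret [DecidableEq K]
    (hsh : Function.Injective (shamirShare K k n x)) (p : ℝ) (i : Fin n) :
    dist (muShamir K k n x p) (fun sv => sv.2 i) = dist (muShamir K k n x p) Prod.fst := by
  have hS : Prod.fst ∘ shamirShare K k n x = fun u => u.1 + (fun _ => (0 : K)) u.2 := by
    funext u; simp [shamirShare]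
  rw [muShamir_eq_dist hsh, dist_dist, dist_dist, hS,
    dist_fst_add_ite_zero (g := fun _ => (0 : K)) rfl]
  exact dist_fst_add_ite_zero
    (g := fun r : Fin (k - 1) → K => ∑ ℓ : Fin (k - 1), x i ^ ((ℓ : ℕ) + 1) * r ℓ) (by simp) _ _

lemma dist_muShamir_secret_restrict [DecidableEq K] (hx : Function.Injective x)
    (hx0 : ∀ i, x i ≠ 0) (e : Fin (k - 1) ↪ Fin n) (p : ℝ) :
    dist (muShamir K k n x p) (fun sv => (sv.1, fun j : univ.map e => sv.2 j.1)) =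
      fun z => if z = 0 then p else (1 - p) / ((Fintype.card K : ℝ) ^ k - 1) := by
  have hbij := shamirShare_restrict_bijective hx hx0 e
  rw [muShamir_eq_dist hbij.injective.of_comp, dist_dist,
    dist_ite_zero_of_injective hbij.injective (by simp [shamirShare]; rfl)]
  funext z
  obtain ⟨u, rfl⟩ := hbij.surjective z
  rw [if_pos (mem_image_of_mem _ (mem_univ u))]

lemma condShannonEnt_muShamir_lt [DecidableEq K] (hx : Function.Injective x)
    (hx0 : ∀ i, x i ≠ 0) (e : Fin (k - 1) ↪ Fin n) (hk : 2 ≤ k) {p : ℝ}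
    (hp : 1 / (Fintype.card K : ℝ) ^ k < p) (hp1 : p < 1) :
    condShannonEnt
        (dist (muShamir K k n x p) (fun sv => (sv.1, fun j : univ.map e => sv.2 j.1))) <
      shannonEnt (dist (muShamir K k n x p) Prod.fst) := by
  have ht : (1 : ℝ) < Fintype.card K := Nat.one_lt_cast.2 Fintype.one_lt_card
  have htk : (1 : ℝ) < (Fintype.card K : ℝ) ^ k := one_lt_pow₀ ht (by omega)
  have hpos : 0 < p := lt_trans (by positivity) hp
  have hq : 0 < (1 - p) / ((Fintype.card K : ℝ) ^ k - 1) := div_pos (by linarith) (by linarith)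
  have hqp : (1 - p) / ((Fintype.card K : ℝ) ^ k - 1) < p := by
    rw [div_lt_iff₀ (by linarith)]
    rw [div_lt_iff₀ (by positivity)] at hp
    linarith
  have hcard :
      (Fintype.card K : ℝ) * Fintype.card (univ.map e → K) = (Fintype.card K : ℝ) ^ k := by
    rw [Fintype.card_fun, Fintype.card_coe, card_map, card_univ, Fintype.card_fin]
    push_cast
    rw [← pow_succ', Nat.sub_add_cancel (by omega)]
  have : Nonempty (univ.map e) := ⟨⟨e ⟨0, by omega⟩, mem_map_of_mem e (mem_univ _)⟩⟩
  have hmarg := margX_dist (muShamir K k n x p) Prod.fst fun sv (j : univ.map e) => sv.2 j.1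
  rw [dist_muShamir_secret_restrict hx hx0] at hmarg
  rw [dist_muShamir_secret_restrict hx hx0, ← hmarg]
  refine condShannonEnt_ite_zero_lt hpos hq hqp.ne' ?_
  rw [hcard]
  linear_combination div_mul_cancel₀ (1 - p) (by linarith : (Fintype.card K : ℝ) ^ k - 1 ≠ 0)

end Shamir

lemma exists_bias_neg_log_eq {T : ℝ} (hT : 1 < T) {k : ℕ} (hk : 1 ≤ k) {R : ℝ} (hR0 : 0 ≤ R)
    (hR : R ≤ log T) :
    ∃ q : ℝ, 1 / T ^ k ≤ q ∧ q ≤ 1 ∧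
      -log ((q * T ^ k + (1 - q) * T ^ (k - 1) - 1) / (T ^ k - 1)) = R := by
  obtain ⟨m, rfl⟩ : ∃ m, k = m + 1 := ⟨k - 1, by omega⟩
  rw [Nat.add_sub_cancel, pow_succ]
  set M := T ^ m
  have hM : 1 ≤ M := one_le_pow₀ hT.le
  set e := exp (-R)
  have he1 : e ≤ 1 := exp_le_one_iff.2 (by linarith)
  have heT : 1 ≤ e * T := by
    have h : exp (-log T) ≤ e := exp_le_exp.2 (by linarith)
    rw [exp_neg, exp_log (by linarith)] at h
    exact (inv_le_iff_one_le_mul₀ (by linarith)).1 h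
  have hA : 0 < M * T - 1 := by nlinarith
  have hB : 0 < M * (T - 1) := by nlinarith
  refine ⟨(e * (M * T - 1) - M + 1) / (M * (T - 1)), ?_, ?_, ?_⟩
  · rw [div_le_div_iff₀ (by positivity) hB]
    nlinarith [mul_nonneg (mul_nonneg (sub_nonneg.2 heT) (by linarith : (0:ℝ) ≤ M)) hA.le]
  · rw [div_le_one hB]; nlinarith
  · have hnum : (e * (M * T - 1) - M + 1) / (M * (T - 1)) * (M * T) +
        (1 - (e * (M * T - 1) - M + 1) / (M * (T - 1))) * M - 1 = e * (M * T - 1) := by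
      linear_combination div_mul_cancel₀ (e * (M * T - 1) - M + 1) hB.ne'
    rw [hnum, mul_div_cancel_right₀ _ hA.ne', log_exp, neg_neg]

theorem shamir_ideal_non_perfect_general (K : Type*) [Field K] [Fintype K]
    [DecidableEq K]
    (k n : ℕ) (hkn : k ≤ n)
    (x : Fin n → K) (hx : Function.Injective x) (hx0 : ∀ i, x i ≠ 0)
    (p : ℝ) (hp : 1 / (Fintype.card K : ℝ) ^ k < p)
    (hp1 : p < 1 / (Fintype.card K : ℝ)) :
    (∀ i : Fin n,
      minEnt (dist (muShamir K k n x p) (fun sv => sv.2 i)) =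
        minEnt (dist (muShamir K k n x p) Prod.fst)) ∧
    (∃ F : Finset (Fin n), F.card = k - 1 ∧
      condShannonEnt (dist (muShamir K k n x p)
          (fun sv => (sv.1, fun j : F => sv.2 j.1))) <
        shannonEnt (dist (muShamir K k n x p) Prod.fst)) ∧
    (∀ R : ℝ, 0 ≤ R → R ≤ Real.log (Fintype.card K) →
      ∃ q : ℝ, 1 / (Fintype.card K : ℝ) ^ k ≤ q ∧ q ≤ 1 ∧
        - Real.log
          ((q * (Fintype.card K : ℝ) ^ k + (1 - q) * (Fintype.card K : ℝ) ^ (k - 1) - 1) /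
            ((Fintype.card K : ℝ) ^ k - 1)) = R) := by
  have ht : (1 : ℝ) < Fintype.card K := Nat.one_lt_cast.2 Fintype.one_lt_card
  have hk : 2 ≤ k := by
    by_contra! hk
    have htk : (Fintype.card K : ℝ) ^ k ≤ Fintype.card K ^ 1 := pow_le_pow_right₀ ht.le (by omega)
    have := one_div_le_one_div_of_le (by positivity) htk
    rw [pow_one] at this
    linarith
  have hp1' : p < 1 := hp1.trans ((div_lt_one (by linarith)).2 ht)
  refine ⟨fun i => ?_, ⟨univ.map (Fin.castLEEmb (n := k - 1) (by omega)), by simp, ?_⟩,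
    fun R hR0 hR => exists_bias_neg_log_eq ht (by omega) hR0 hR⟩
  · rw [dist_muShamir_share_eq_dist_secret (shamirShare_injective hx hx0 (by omega))]
  · exact condShannonEnt_muShamir_lt hx hx0 (Fin.castLEEmb (by omega)) hk hp hp1'

/-- for `1/t^k < p < 1/t` the biased Shamir-type `(k,n)`
construction is ideal (`R_∞(V_i) = R_∞(S)` for all `i`) yet non-perfect
(`H(S|V_F) < H(S)` for some `F` with `|F| = k - 1`); moreover, as `p` ranges
over `[1/t^k, 1]` the value `R = -log((p t^k + (1-p) t^{k-1} - 1)/(t^k - 1))`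
attains every value in `[0, log t]`. -/
theorem shamir_ideal_non_perfect (K : Type*) [Field K] [Fintype K]
    [DecidableEq K]
    (k n : ℕ) (hk : 1 ≤ k) (hkn : k ≤ n) (hn : n < Fintype.card K)
    (x : Fin n → K) (hx : Function.Injective x) (hx0 : ∀ i, x i ≠ 0)
    (p : ℝ) (hp : 1 / (Fintype.card K : ℝ) ^ k < p)
    (hp1 : p < 1 / (Fintype.card K : ℝ)) :
    (∀ i : Fin n,
      minEnt (dist (muShamir K k n x p) (fun sv => sv.2 i)) =
        minEnt (dist (muShamir K k n x p) Prod.fst)) ∧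
    (∃ F : Finset (Fin n), F.card = k - 1 ∧
      condShannonEnt (dist (muShamir K k n x p)
          (fun sv => (sv.1, fun j : F => sv.2 j.1))) <
        shannonEnt (dist (muShamir K k n x p) Prod.fst)) ∧
    (∀ R : ℝ, 0 ≤ R → R ≤ Real.log (Fintype.card K) →
      ∃ q : ℝ, 1 / (Fintype.card K : ℝ) ^ k ≤ q ∧ q ≤ 1 ∧
        - Real.log
          ((q * (Fintype.card K : ℝ) ^ k + (1 - q) * (Fintype.card K : ℝ) ^ (k - 1) - 1) /
            ((Fintype.card K : ℝ) ^ k - 1)) = R) :=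
  shamir_ideal_non_perfect_general K k n hkn x hx hx0 p hp hp1
end
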